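/- arXiv:1606.08943 — 5 statements merged into one kernel-verified Lean document; each statement's English description precedes it below -/
import Mathlib

section
/- Let R = (<₁, <₂, <₃) be a standard representation of a finite set V with |V| ≥ 3, with <ᵢ-maximum elements a₁, a₂, a₃. Then a₃ is the <₂-minimum element of the set of neighbors of a₁ in Σ₂(R), and a₂ is the <₂-maximum element of the set of neighbors of a₁ in Σ₂(R). -/
open SimpleGraph

variable {V : Type*}

/-- The graph Σ₂(R) for a triple of linear orders R = (l₁, l₂, l₃) on V:
`x` and `y` are adjacent iff every other vertex `z` lies above both `x` and `y`
in one of the three orders. -/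
def Sigma2 (l₁ l₂ l₃ : LinearOrder V) : SimpleGraph V where
  Adj x y := x ≠ y ∧ ∀ z, z ≠ x → z ≠ y →
    (l₁.lt x z ∧ l₁.lt y z) ∨ (l₂.lt x z ∧ l₂.lt y z) ∨ (l₃.lt x z ∧ l₃.lt y z)
  symm := by
    constructor
    rintro x y ⟨hxy, h⟩
    exact ⟨hxy.symm, fun z hzy hzx => by rcases h z hzx hzy with h|h|h <;> tauto⟩
  loopless := ⟨fun x h => h.1 rfl⟩

/-- The three orders have empty intersection: for distinct x, y, some order has x below y. -/
def IsRep (l₁ l₂ l₃ : LinearOrder V) : Prop :=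
  ∀ x y : V, x ≠ y → l₁.lt x y ∨ l₂.lt x y ∨ l₃.lt x y

/-- `a` is the maximum element of the linear order `l`. -/
def IsMaxOf (l : LinearOrder V) (a : V) : Prop := ∀ x, x ≠ a → l.lt x a

/-- `a` is among the two smallest elements of `l`: at most one element lies below `a`. -/
def AmongTwoSmallest (l : LinearOrder V) (a : V) : Prop :=
  ∀ x y, l.lt x a → l.lt y a → x = y

/-- `R = (l₁, l₂, l₃)` is a standard representation with `<ᵢ`-maxima `a₁, a₂, a₃`. -/
structure IsStdRep (l₁ l₂ l₃ : LinearOrder V) (a₁ a₂ a₃ : V) : Prop where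
  rep : IsRep l₁ l₂ l₃
  top₁ : IsMaxOf l₁ a₁
  top₂ : IsMaxOf l₂ a₂
  top₃ : IsMaxOf l₃ a₃
  a₁_small₂ : AmongTwoSmallest l₂ a₁
  a₁_small₃ : AmongTwoSmallest l₃ a₁
  a₂_small₁ : AmongTwoSmallest l₁ a₂
  a₂_small₃ : AmongTwoSmallest l₃ a₂
  a₃_small₁ : AmongTwoSmallest l₁ a₃
  a₃_small₂ : AmongTwoSmallest l₂ a₃

/-- The restriction of a linear order on `V` to `V \ {b}`. -/
def restrictOrder (l : LinearOrder V) (b : V) : LinearOrder {x : V // x ≠ b} :=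
  @LinearOrder.lift' _ _ l Subtype.val Subtype.val_injective

theorem AmongTwoSmallest.ne_of_isMaxOf [Fintype V] (hV : 3 ≤ Fintype.card V)
    {l : LinearOrder V} {a b : V} (ha : AmongTwoSmallest l a) (hb : IsMaxOf l b) : a ≠ b := by
  rintro rfl
  have h : Fintype.card {x : V | x ≠ a} ≤ 1 :=
    Fintype.card_le_one_iff.mpr fun x y => Subtype.ext (ha x y (hb x x.2) (hb y y.2))
  rw [Set.card_ne_eq] at h
  omega

theorem AmongTwoSmallest.lt_of_ne {l : LinearOrder V} {a b z : V} (hab : a ≠ b)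
    (ha : AmongTwoSmallest l a) (hb : AmongTwoSmallest l b) (hza : z ≠ a) (hzb : z ≠ b) :
    l.lt a z := by
  let _ := l
  by_contra! hz
  have hza' : z < a := lt_of_le_of_ne hz hza
  rcases lt_or_gt_of_ne hab with hlt | hgt
  · exact hza (hb z a (hza'.trans hlt) hlt)
  · exact hzb (ha z b hza' hgt)

/-- a₃ is the <₂-minimum neighbor of a₁ in Σ₂(R), and a₂ is the
<₂-maximum neighbor of a₁ in Σ₂(R). -/
theorem stmt2 {V : Type*} [Fintype V] (hV : 3 ≤ Fintype.card V)
    (l₁ l₂ l₃ : LinearOrder V) (a₁ a₂ a₃ : V)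
    (hR : IsStdRep l₁ l₂ l₃ a₁ a₂ a₃) :
    ((Sigma2 l₁ l₂ l₃).Adj a₁ a₃ ∧
        ∀ w, (Sigma2 l₁ l₂ l₃).Adj a₁ w → w ≠ a₃ → l₂.lt a₃ w) ∧
      ((Sigma2 l₁ l₂ l₃).Adj a₁ a₂ ∧
        ∀ w, (Sigma2 l₁ l₂ l₃).Adj a₁ w → w ≠ a₂ → l₂.lt w a₂) := by
  have h₁₃ : a₁ ≠ a₃ := hR.a₁_small₃.ne_of_isMaxOf hV hR.top₃
  have h₁₂ : a₁ ≠ a₂ := hR.a₁_small₂.ne_of_isMaxOf hV hR.top₂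
  -- standardness makes a₁, a₃ the two `<₂`-smallest elements and a₁, a₂ the two `<₃`-smallest
  have below₂ {z : V} (h₁ : z ≠ a₁) (h₃ : z ≠ a₃) : l₂.lt a₁ z ∧ l₂.lt a₃ z :=
    ⟨hR.a₁_small₂.lt_of_ne h₁₃ hR.a₃_small₂ h₁ h₃,
      hR.a₃_small₂.lt_of_ne h₁₃.symm hR.a₁_small₂ h₃ h₁⟩
  have below₃ {z : V} (h₁ : z ≠ a₁) (h₂ : z ≠ a₂) : l₃.lt a₁ z ∧ l₃.lt a₂ z :=
    ⟨hR.a₁_small₃.lt_of_ne h₁₂ hR.a₂_small₃ h₁ h₂,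
      hR.a₂_small₃.lt_of_ne h₁₂.symm hR.a₁_small₃ h₂ h₁⟩
  exact ⟨⟨⟨h₁₃, fun z h₁ h₃ => Or.inr (Or.inl (below₂ h₁ h₃))⟩,
      fun w hw hw₃ => (below₂ hw.ne.symm hw₃).2⟩,
    ⟨⟨h₁₂, fun z h₁ h₂ => Or.inr (Or.inr (below₃ h₁ h₂))⟩, fun w _ hw => hR.top₂ w hw⟩⟩
end

section
/- Let R = (<₁, <₂, <₃) be a standard representation of a finite set V with |V| ≥ 3, with <ᵢ-maximum elements a₁, a₂, a₃. If w and w' are <₂-consecutive neighbors of a₁ in Σ₂(R), then ww' is an edge of Σ₂(R). -/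
open SimpleGraph

variable {V : Type*}

/-!
Let `w <₂ w'` be consecutive neighbours of `a₁`. As `a₁` is `<₁`-maximal, each vertex `z ≠ a₁, w`
lies above both `a₁` and `w` in `<₂` or in `<₃`, and likewise for `w'`. Comparing the two witnesses,
the only vertices `z` that can break the edge `ww'` are the *wedged* ones: above `a₁` in `<₂` and
`<₃`, with `w <₂ z <₂ w'` and `w' <₃ z <₃ w`. A `<₁`-maximal wedged vertex is itself a neighbour of
`a₁` (another wedged vertex above it is excluded by the representation property), and it lies
strictly `<₂`-between `w` and `w'`; so there is none.
-/

-- Three linear orders on `V` are in play at once, so the order facts used below take the order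
-- explicitly instead of leaving it to instance search.
namespace LinearOrder

variable (l : LinearOrder V) {x y z : V}

protected theorem lt_trans (h : l.lt x y) (h' : l.lt y z) : l.lt x z := _root_.lt_trans h h'

protected theorem lt_asymm (h : l.lt x y) : ¬l.lt y x := _root_.lt_asymm h

protected theorem ne_of_lt (h : l.lt x y) : x ≠ y := _root_.ne_of_lt h

protected theorem lt_or_gt_of_ne (h : x ≠ y) : l.lt x y ∨ l.lt y x := _root_.lt_or_gt_of_ne h

protected theorem exists_maximal [Finite V] {p : V → Prop} (h : ∃ z, p z) :
    ∃ z, p z ∧ ∀ u, p u → ¬l.lt z u := by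
  obtain ⟨z, hz, hmax⟩ := Set.exists_max_image {u | p u} id (Set.toFinite _) h
  exact ⟨z, hz, fun u hu => not_lt_of_ge (hmax u hu)⟩

end LinearOrder

namespace Sigma2

variable {l₁ l₂ l₃ : LinearOrder V} {a w w' z : V}

def IsWedged (l₂ l₃ : LinearOrder V) (a w w' z : V) : Prop :=
  l₂.lt a z ∧ l₂.lt w z ∧ l₂.lt z w' ∧ l₃.lt a z ∧ l₃.lt w' z ∧ l₃.lt z w

theorem above_of_adj_of_isMaxOf (ha : IsMaxOf l₁ a) (h : (Sigma2 l₁ l₂ l₃).Adj a w)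
    (hza : z ≠ a) (hzw : z ≠ w) : (l₂.lt a z ∧ l₂.lt w z) ∨ (l₃.lt a z ∧ l₃.lt w z) := by
  rcases h.2 z hza hzw with h₁ | h₂ | h₃
  · exact absurd (ha z hza) (l₁.lt_asymm h₁.1)
  · exact Or.inl h₂
  · exact Or.inr h₃

theorem above_or_isWedged (ha : IsMaxOf l₁ a) (hw : (Sigma2 l₁ l₂ l₃).Adj a w)
    (hw' : (Sigma2 l₁ l₂ l₃).Adj a w') (hza : z ≠ a) (hzw : z ≠ w) (hzw' : z ≠ w') :
    (l₂.lt a z ∧ l₂.lt w' z) ∨ (l₃.lt a z ∧ l₃.lt w z ∧ l₃.lt w' z) ∨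
      IsWedged l₂ l₃ a w w' z := by
  rcases above_of_adj_of_isMaxOf ha hw hza hzw with ⟨h₂a, h₂w⟩ | ⟨h₃a, h₃w⟩ <;>
    rcases above_of_adj_of_isMaxOf ha hw' hza hzw' with ⟨k₂a, k₂w'⟩ | ⟨k₃a, k₃w'⟩
  · exact Or.inl ⟨h₂a, k₂w'⟩
  · rcases l₂.lt_or_gt_of_ne hzw' with hzw'₂ | hzw'₂
    · rcases l₃.lt_or_gt_of_ne hzw with hzw₃ | hzw₃
      · exact Or.inr (Or.inr ⟨h₂a, h₂w, hzw'₂, k₃a, k₃w', hzw₃⟩)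
      · exact Or.inr (Or.inl ⟨k₃a, hzw₃, k₃w'⟩)
    · exact Or.inl ⟨h₂a, hzw'₂⟩
  · exact Or.inl ⟨k₂a, k₂w'⟩
  · exact Or.inr (Or.inl ⟨h₃a, h₃w, k₃w'⟩)

theorem adj_of_forall_not_isWedged (ha : IsMaxOf l₁ a) (hw : (Sigma2 l₁ l₂ l₃).Adj a w)
    (hw' : (Sigma2 l₁ l₂ l₃).Adj a w') (hlt : l₂.lt w w')
    (hwedge : ∀ z, ¬IsWedged l₂ l₃ a w w' z) : (Sigma2 l₁ l₂ l₃).Adj w w' := by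
  refine ⟨l₂.ne_of_lt hlt, fun z hzw hzw' => ?_⟩
  rcases eq_or_ne z a with rfl | hza
  · exact Or.inl ⟨ha w hw.ne', ha w' hw'.ne'⟩
  rcases above_or_isWedged ha hw hw' hza hzw hzw' with ⟨-, h₂⟩ | ⟨-, h₃w, h₃w'⟩ | hz
  · exact Or.inr (Or.inl ⟨l₂.lt_trans hlt h₂, h₂⟩)
  · exact Or.inr (Or.inr ⟨h₃w, h₃w'⟩)
  · exact absurd hz (hwedge z)

theorem adj_of_isWedged_of_maximal (hrep : IsRep l₁ l₂ l₃) (ha : IsMaxOf l₁ a)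
    (hw : (Sigma2 l₁ l₂ l₃).Adj a w) (hw' : (Sigma2 l₁ l₂ l₃).Adj a w')
    (hz : IsWedged l₂ l₃ a w w' z) (hmax : ∀ u, IsWedged l₂ l₃ a w w' u → ¬l₁.lt z u) :
    (Sigma2 l₁ l₂ l₃).Adj a z := by
  obtain ⟨hz₂a, -, hz₂w', hz₃a, -, hz₃w⟩ := hz
  refine ⟨l₂.ne_of_lt hz₂a, fun u hua huz => ?_⟩
  rcases eq_or_ne u w with rfl | huw
  · exact Or.inr (Or.inr ⟨l₃.lt_trans hz₃a hz₃w, hz₃w⟩)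
  rcases eq_or_ne u w' with rfl | huw'
  · exact Or.inr (Or.inl ⟨l₂.lt_trans hz₂a hz₂w', hz₂w'⟩)
  rcases above_or_isWedged ha hw hw' hua huw huw' with ⟨h₂a, h₂⟩ | ⟨h₃a, h₃, -⟩ | hu
  · exact Or.inr (Or.inl ⟨h₂a, l₂.lt_trans hz₂w' h₂⟩)
  · exact Or.inr (Or.inr ⟨h₃a, l₃.lt_trans hz₃w h₃⟩)
  · rcases hrep z u huz.symm with h₁ | h₂ | h₃
    · exact absurd h₁ (hmax u hu)
    · exact Or.inr (Or.inl ⟨hu.1, h₂⟩)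
    · exact Or.inr (Or.inr ⟨hu.2.2.2.1, h₃⟩)

theorem exists_adj_isWedged [Finite V] (hrep : IsRep l₁ l₂ l₃) (ha : IsMaxOf l₁ a)
    (hw : (Sigma2 l₁ l₂ l₃).Adj a w) (hw' : (Sigma2 l₁ l₂ l₃).Adj a w')
    (hz : IsWedged l₂ l₃ a w w' z) :
    ∃ u, (Sigma2 l₁ l₂ l₃).Adj a u ∧ IsWedged l₂ l₃ a w w' u := by
  obtain ⟨u, hu, hmax⟩ := l₁.exists_maximal ⟨z, hz⟩
  exact ⟨u, adj_of_isWedged_of_maximal hrep ha hw hw' hu hmax, hu⟩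

end Sigma2

theorem stmt4_general {V : Type*} [Fintype V]
    (l₁ l₂ l₃ : LinearOrder V) (a₁ a₂ a₃ : V)
    (hR : IsStdRep l₁ l₂ l₃ a₁ a₂ a₃)
    (w w' : V) (hw : (Sigma2 l₁ l₂ l₃).Adj a₁ w) (hw' : (Sigma2 l₁ l₂ l₃).Adj a₁ w')
    (hlt : l₂.lt w w')
    (hcons : ∀ u, (Sigma2 l₁ l₂ l₃).Adj a₁ u → ¬(l₂.lt w u ∧ l₂.lt u w')) :
    (Sigma2 l₁ l₂ l₃).Adj w w' := by
  refine Sigma2.adj_of_forall_not_isWedged hR.top₁ hw hw' hlt fun z hz => ?_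
  obtain ⟨u, hu, -, hu₂w, hu₂w', -⟩ :=
    Sigma2.exists_adj_isWedged hR.rep hR.top₁ hw hw' hz
  exact hcons u hu ⟨hu₂w, hu₂w'⟩

/-- If w, w' are <₂-consecutive neighbors of a₁ in Σ₂(R), then ww' is an
edge of Σ₂(R). -/
theorem stmt4 {V : Type*} [Fintype V] (hV : 3 ≤ Fintype.card V)
    (l₁ l₂ l₃ : LinearOrder V) (a₁ a₂ a₃ : V)
    (hR : IsStdRep l₁ l₂ l₃ a₁ a₂ a₃)
    (w w' : V) (hw : (Sigma2 l₁ l₂ l₃).Adj a₁ w) (hw' : (Sigma2 l₁ l₂ l₃).Adj a₁ w')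
    (hlt : l₂.lt w w')
    (hcons : ∀ u, (Sigma2 l₁ l₂ l₃).Adj a₁ u → ¬(l₂.lt w u ∧ l₂.lt u w')) :
    (Sigma2 l₁ l₂ l₃).Adj w w' :=
  stmt4_general l₁ l₂ l₃ a₁ a₂ a₃ hR w w' hw hw' hlt hcons
end

section
/- Let R = (<₁, <₂, <₃) be a standard representation of a finite set V with |V| ≥ 4, with <ᵢ-maximum elements a₁, a₂, a₃, and let b be the <₁-maximum element of V \ {a₁}. Let w₋ be the <₂-largest neighbor of a₁ in Σ₂(R) satisfying w₋ <₂ b, and let w₊ be the <₂-smallest neighbor of a₁ in Σ₂(R) satisfying b <₂ w₊. Then every neighbor z of b in Σ₂(R) with z ∉ {a₁, w₋, w₊} satisfies b <₂ z <₂ w₊ and b <₃ z <₃ w₋. -/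
/-! For an edge `xy` of `Σ₂(R)` and a vertex `u <₁ x`, the clause at `u` must be met in `<₂` or
`<₃`; as `a₁` and `b` are the two largest elements of `<₁`, edges at `a₁` and `b` are governed by
`<₂` and `<₃` alone. Reading the edges `b z`, `a₁ w₋`, `a₁ w₊` at `w₋`, `b`, `w₊` gives
`z <₃ w₋` and `z <₂ w₊`. If `z` were below `b` in `<₂` or in `<₃`, then `a₁`, which lies below `b`
in both orders and is among the two smallest elements of `<₃`, would inherit the edge `b z`.
The edge `a₁ z` contradicts the choice of `w₋` in the first case (the edge `a₁ w₋` read at `z`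
forces `w₋ <₂ z`) and the choice of `w₊` in the second. -/

open SimpleGraph

variable {V : Type*}

theorem AmongTwoSmallest.lt_of_lt {l : LinearOrder V} {a x y : V} (ha : AmongTwoSmallest l a)
    (hxy : l.lt x y) (hya : y ≠ a) : l.lt a y :=
  (@Ne.lt_or_gt _ l _ _ hya).resolve_left fun hy =>
    @ne_of_lt _ l.toPreorder _ _ hxy (ha x y (@lt_trans _ l.toPreorder _ _ _ hxy hy) hy)

namespace Sigma2

variable {l₁ l₂ l₃ : LinearOrder V} {x y u : V}

theorem lt₂_or_lt₃_of_adj (h : (Sigma2 l₁ l₂ l₃).Adj x y) (hux : u ≠ x) (huy : u ≠ y)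
    (hu : l₁.lt u x) : (l₂.lt x u ∧ l₂.lt y u) ∨ (l₃.lt x u ∧ l₃.lt y u) :=
  (h.2 u hux huy).resolve_left fun hxu => @lt_asymm _ l₁.toPreorder _ _ hu hxu.1

theorem lt₃_of_adj (h : (Sigma2 l₁ l₂ l₃).Adj x y) (hux : u ≠ x) (huy : u ≠ y)
    (hu : l₁.lt u x) (hu₂ : ¬ (l₂.lt x u ∧ l₂.lt y u)) : l₃.lt x u ∧ l₃.lt y u :=
  (lt₂_or_lt₃_of_adj h hux huy hu).resolve_left hu₂

theorem lt₂_of_adj (h : (Sigma2 l₁ l₂ l₃).Adj x y) (hux : u ≠ x) (huy : u ≠ y)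
    (hu : l₁.lt u x) (hu₃ : ¬ (l₃.lt x u ∧ l₃.lt y u)) : l₂.lt x u ∧ l₂.lt y u :=
  (lt₂_or_lt₃_of_adj h hux huy hu).resolve_right hu₃

theorem adj_of_adj_of_isSecondMax {a b z : V} (ha₃ : AmongTwoSmallest l₃ a)
    (hb : ∀ x, x ≠ a → x ≠ b → l₁.lt x b) (hbz : (Sigma2 l₁ l₂ l₃).Adj b z) (hza : z ≠ a)
    (hab₂ : l₂.lt a b) (hzb : l₂.lt z b ∨ (l₃.lt a b ∧ l₃.lt z b)) :
    (Sigma2 l₁ l₂ l₃).Adj a z := by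
  refine ⟨hza.symm, fun u hua huz => ?_⟩
  by_cases hub : u = b
  · subst hub
    exact Or.inr (hzb.imp_left fun hzb₂ => ⟨hab₂, hzb₂⟩)
  rcases lt₂_or_lt₃_of_adj hbz hub huz (hb u hua hub) with ⟨hbu, hzu⟩ | ⟨hbu, hzu⟩
  · exact Or.inr (Or.inl ⟨@lt_trans _ l₂.toPreorder _ _ _ hab₂ hbu, hzu⟩)
  · exact Or.inr (Or.inr ⟨ha₃.lt_of_lt hbu hua, hzu⟩)

end Sigma2

open Sigma2 in
theorem stmt7_general {V : Type*}
    (l₁ l₂ l₃ : LinearOrder V) (a₁ a₂ a₃ : V)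
    (hR : IsStdRep l₁ l₂ l₃ a₁ a₂ a₃)
    (b : V) (hba : b ≠ a₁) (hb : ∀ x, x ≠ a₁ → x ≠ b → l₁.lt x b)
    (wlo : V) (hwm : (Sigma2 l₁ l₂ l₃).Adj a₁ wlo ∧ l₂.lt wlo b ∧
      ∀ w, (Sigma2 l₁ l₂ l₃).Adj a₁ w → l₂.lt w b → w ≠ wlo → l₂.lt w wlo)
    (whi : V) (hwp : (Sigma2 l₁ l₂ l₃).Adj a₁ whi ∧ l₂.lt b whi ∧
      ∀ w, (Sigma2 l₁ l₂ l₃).Adj a₁ w → l₂.lt b w → w ≠ whi → l₂.lt whi w)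
    (z : V) (hz : (Sigma2 l₁ l₂ l₃).Adj b z)
    (hz₁ : z ≠ a₁) (hzm : z ≠ wlo) (hzp : z ≠ whi) :
    (l₂.lt b z ∧ l₂.lt z whi) ∧ (l₃.lt b z ∧ l₃.lt z wlo) := by
  obtain ⟨hwlo, hwlo_b, hwlo_max⟩ := hwm
  obtain ⟨hwhi, hb_whi, hwhi_min⟩ := hwp
  have hwlo_ne_b : wlo ≠ b := @ne_of_lt _ l₂.toPreorder _ _ hwlo_b
  have hwhi_ne_b : whi ≠ b := (@ne_of_lt _ l₂.toPreorder _ _ hb_whi).symm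
  have hz_wlo : l₃.lt z wlo := (lt₃_of_adj hz hwlo_ne_b hzm.symm (hb _ hwlo.ne' hwlo_ne_b)
    fun h => @lt_asymm _ l₂.toPreorder _ _ hwlo_b h.1).2
  have hab₃ : l₃.lt a₁ b ∧ l₃.lt whi b := lt₃_of_adj hwhi hba hwhi_ne_b.symm (hR.top₁ b hba)
    fun h => @lt_asymm _ l₂.toPreorder _ _ hb_whi h.2
  have hz_whi : l₂.lt z whi := (lt₂_of_adj hz hwhi_ne_b hzp.symm (hb _ hwhi.ne' hwhi_ne_b)
    fun h => @lt_asymm _ l₃.toPreorder _ _ hab₃.2 h.1).2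
  have hab₂ : l₂.lt a₁ b := hR.a₁_small₂.lt_of_lt hwlo_b hba
  have hb_z₂ : l₂.lt b z := (@Ne.lt_or_gt _ l₂ _ _ hz.ne).resolve_right fun hzb => by
    have hwlo_z := (lt₂_of_adj hwlo hz₁ hzm (hR.top₁ z hz₁)
      fun h => @lt_asymm _ l₃.toPreorder _ _ hz_wlo h.2).2
    have ha₁z := adj_of_adj_of_isSecondMax hR.a₁_small₃ hb hz hz₁ hab₂ (Or.inl hzb)
    exact @lt_asymm _ l₂.toPreorder _ _ hwlo_z (hwlo_max z ha₁z hzb hzm)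
  have hb_z₃ : l₃.lt b z := (@Ne.lt_or_gt _ l₃ _ _ hz.ne).resolve_right fun hzb => by
    have ha₁z := adj_of_adj_of_isSecondMax hR.a₁_small₃ hb hz hz₁ hab₂ (Or.inr ⟨hab₃.1, hzb⟩)
    exact @lt_asymm _ l₂.toPreorder _ _ hz_whi (hwhi_min z ha₁z hb_z₂ hzp)
  exact ⟨⟨hb_z₂, hz_whi⟩, ⟨hb_z₃, hz_wlo⟩⟩

/-- With b the <₁-maximum of V \ {a₁}, wlo the <₂-largest neighbor of a₁
below b and whi the <₂-smallest neighbor of a₁ above b, every neighbor z of b other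
than a₁, wlo, whi satisfies b <₂ z <₂ whi and b <₃ z <₃ wlo. -/
theorem stmt7 {V : Type*} [Fintype V] (hV : 4 ≤ Fintype.card V)
    (l₁ l₂ l₃ : LinearOrder V) (a₁ a₂ a₃ : V)
    (hR : IsStdRep l₁ l₂ l₃ a₁ a₂ a₃)
    (b : V) (hba : b ≠ a₁) (hb : ∀ x, x ≠ a₁ → x ≠ b → l₁.lt x b)
    (wlo : V) (hwm : (Sigma2 l₁ l₂ l₃).Adj a₁ wlo ∧ l₂.lt wlo b ∧
      ∀ w, (Sigma2 l₁ l₂ l₃).Adj a₁ w → l₂.lt w b → w ≠ wlo → l₂.lt w wlo)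
    (whi : V) (hwp : (Sigma2 l₁ l₂ l₃).Adj a₁ whi ∧ l₂.lt b whi ∧
      ∀ w, (Sigma2 l₁ l₂ l₃).Adj a₁ w → l₂.lt b w → w ≠ whi → l₂.lt whi w)
    (z : V) (hz : (Sigma2 l₁ l₂ l₃).Adj b z)
    (hz₁ : z ≠ a₁) (hzm : z ≠ wlo) (hzp : z ≠ whi) :
    (l₂.lt b z ∧ l₂.lt z whi) ∧ (l₃.lt b z ∧ l₃.lt z wlo) :=
  stmt7_general l₁ l₂ l₃ a₁ a₂ a₃ hR b hba hb wlo hwm whi hwp z hz hz₁ hzm hzp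
end

section
/- Let R = (<₁, <₂, <₃) be a standard representation of a finite set V with |V| ≥ 4, with <ᵢ-maximum elements a₁, a₂, a₃, let b be the <₁-maximum element of V \ {a₁}, and let R' be the standard representation of V' = V \ {b} obtained by restricting each <ᵢ to V'. Then for all distinct s, t ∈ V', the pair st is an edge of Σ₂(R') if and only if either st is an edge of Σ₂(R), or one of s, t equals a₁ and the other is adjacent to b in Σ₂(R). (That is, Σ₂(R') is the graph obtained from Σ₂(R) by contracting the edge a₁b and labelling the new vertex a₁.) -/
open SimpleGraph

variable {V : Type*}

/-! For `s, t ≠ b`, an edge `st` of Σ₂(R) is an edge of Σ₂(R') for which the extra vertex `b` also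
lies above both `s` and `t` in some order. If neither of `s, t` is `a₁`, the order `<₁` puts `b`
above both, so the two graphs agree. For the pair `a₁t` the point is that at any other vertex `z`
the roles of `a₁` and `b` can be exchanged: `<₁` never places `z` above `a₁` or `b`, and in `<₂`
and `<₃`, where `a₁` has at most one element below it, `b < z` forces `a₁ < z`; conversely
`a₁, t < z` gives `b < z` unless `b` already lies above `a₁` and `t`. -/

lemma AmongTwoSmallest.lt_of_lt_s9 {l : LinearOrder V} {a b z : V} (h : AmongTwoSmallest l a)
    (hza : z ≠ a) (hbz : l.lt b z) : l.lt a z := by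
  let := l
  refine (lt_or_gt_of_ne hza).resolve_left fun hza' => ?_
  exact hbz.ne (h b z (hbz.trans hza') hza')

lemma lt_and_lt_or_lt_of_lt (l : LinearOrder V) {x y z b : V} (hzb : z ≠ b)
    (hx : l.lt x z) (hy : l.lt y z) : (l.lt x b ∧ l.lt y b) ∨ l.lt b z := by
  let := l
  exact (lt_or_gt_of_ne hzb).imp (fun hzb' => ⟨hx.trans hzb', hy.trans hzb'⟩) id

section Sigma2

variable (l₁ l₂ l₃ : LinearOrder V)

def AboveBoth (x y z : V) : Prop :=
  (l₁.lt x z ∧ l₁.lt y z) ∨ (l₂.lt x z ∧ l₂.lt y z) ∨ (l₃.lt x z ∧ l₃.lt y z)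

lemma sigma2_adj_iff {x y : V} :
    (Sigma2 l₁ l₂ l₃).Adj x y ↔ x ≠ y ∧ ∀ z, z ≠ x → z ≠ y → AboveBoth l₁ l₂ l₃ x y z :=
  Iff.rfl

lemma sigma2_restrictOrder_adj_iff {b s t : V} (hs : s ≠ b) (ht : t ≠ b) :
    (Sigma2 (restrictOrder l₁ b) (restrictOrder l₂ b) (restrictOrder l₃ b)).Adj
        ⟨s, hs⟩ ⟨t, ht⟩ ↔
      s ≠ t ∧ ∀ z, z ≠ b → z ≠ s → z ≠ t → AboveBoth l₁ l₂ l₃ s t z := by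
  simp only [sigma2_adj_iff, ne_eq, Subtype.mk.injEq, Subtype.forall]
  exact and_congr_right fun _ => forall_congr' fun _ => Iff.rfl

lemma sigma2_adj_iff_restrictOrder {b s t : V} (hs : s ≠ b) (ht : t ≠ b) :
    (Sigma2 l₁ l₂ l₃).Adj s t ↔
      (Sigma2 (restrictOrder l₁ b) (restrictOrder l₂ b) (restrictOrder l₃ b)).Adj
        ⟨s, hs⟩ ⟨t, ht⟩ ∧ AboveBoth l₁ l₂ l₃ s t b := by
  rw [sigma2_restrictOrder_adj_iff, sigma2_adj_iff]
  constructor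
  · rintro ⟨hst, h⟩
    exact ⟨⟨hst, fun z _ => h z⟩, h b hs.symm ht.symm⟩
  · rintro ⟨⟨hst, h⟩, hb⟩
    refine ⟨hst, fun z hzs hzt => ?_⟩
    by_cases hzb : z = b
    · exact hzb ▸ hb
    · exact h z hzb hzs hzt

variable {l₁ l₂ l₃} {a₁ b : V}

lemma aboveBoth_max_of_aboveBoth_subMax (h₂ : AmongTwoSmallest l₂ a₁) (h₃ : AmongTwoSmallest l₃ a₁)
    (hb : ∀ x, x ≠ a₁ → x ≠ b → l₁.lt x b) {t z : V} (hza : z ≠ a₁) (hzb : z ≠ b)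
    (h : AboveBoth l₁ l₂ l₃ b t z) : AboveBoth l₁ l₂ l₃ a₁ t z := by
  rcases h with ⟨hbz, _⟩ | ⟨hbz, htz⟩ | ⟨hbz, htz⟩
  · let := l₁
    exact absurd (hb z hza hzb) hbz.asymm
  · exact Or.inr (Or.inl ⟨h₂.lt_of_lt_s9 hza hbz, htz⟩)
  · exact Or.inr (Or.inr ⟨h₃.lt_of_lt_s9 hza hbz, htz⟩)

lemma aboveBoth_subMax_of_aboveBoth_max (htop : IsMaxOf l₁ a₁) {t z : V} (hza : z ≠ a₁)
    (hzb : z ≠ b) (hnb : ¬AboveBoth l₁ l₂ l₃ a₁ t b) (h : AboveBoth l₁ l₂ l₃ a₁ t z) :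
    AboveBoth l₁ l₂ l₃ b t z := by
  rcases h with ⟨haz, _⟩ | ⟨haz, htz⟩ | ⟨haz, htz⟩
  · let := l₁
    exact absurd (htop z hza) haz.asymm
  · refine Or.inr (Or.inl ⟨?_, htz⟩)
    exact (lt_and_lt_or_lt_of_lt l₂ hzb haz htz).resolve_left fun h => hnb (Or.inr (Or.inl h))
  · refine Or.inr (Or.inr ⟨?_, htz⟩)
    exact (lt_and_lt_or_lt_of_lt l₃ hzb haz htz).resolve_left fun h => hnb (Or.inr (Or.inr h))

lemma sigma2_restrictOrder_adj_iff_of_ne (hb : ∀ x, x ≠ a₁ → x ≠ b → l₁.lt x b) {s t : V}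
    (hs : s ≠ b) (ht : t ≠ b) (hsa : s ≠ a₁) (hta : t ≠ a₁) :
    (Sigma2 (restrictOrder l₁ b) (restrictOrder l₂ b) (restrictOrder l₃ b)).Adj
        ⟨s, hs⟩ ⟨t, ht⟩ ↔ (Sigma2 l₁ l₂ l₃).Adj s t := by
  rw [sigma2_adj_iff_restrictOrder l₁ l₂ l₃ hs ht]
  exact (and_iff_left (Or.inl ⟨hb s hsa hs, hb t hta ht⟩)).symm

lemma sigma2_restrictOrder_adj_max_iff (htop : IsMaxOf l₁ a₁) (h₂ : AmongTwoSmallest l₂ a₁)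
    (h₃ : AmongTwoSmallest l₃ a₁) (hb : ∀ x, x ≠ a₁ → x ≠ b → l₁.lt x b) {t : V}
    (ha : a₁ ≠ b) (ht : t ≠ b) (hta : t ≠ a₁) :
    (Sigma2 (restrictOrder l₁ b) (restrictOrder l₂ b) (restrictOrder l₃ b)).Adj
        ⟨a₁, ha⟩ ⟨t, ht⟩ ↔ (Sigma2 l₁ l₂ l₃).Adj a₁ t ∨ (Sigma2 l₁ l₂ l₃).Adj b t := by
  constructor
  · intro h
    by_cases hab : AboveBoth l₁ l₂ l₃ a₁ t b
    · exact Or.inl ((sigma2_adj_iff_restrictOrder l₁ l₂ l₃ ha ht).2 ⟨h, hab⟩)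
    obtain ⟨-, h⟩ := (sigma2_restrictOrder_adj_iff l₁ l₂ l₃ ha ht).1 h
    refine Or.inr ⟨ht.symm, fun z hzb hzt => ?_⟩
    by_cases hza : z = a₁
    · exact hza ▸ Or.inl ⟨htop b ha.symm, htop t hta⟩
    · exact aboveBoth_subMax_of_aboveBoth_max htop hza hzb hab (h z hzb hza hzt)
  · rintro (h | ⟨-, h⟩)
    · exact ((sigma2_adj_iff_restrictOrder l₁ l₂ l₃ ha ht).1 h).1
    · refine (sigma2_restrictOrder_adj_iff l₁ l₂ l₃ ha ht).2 ⟨hta.symm, fun z hzb hza hzt => ?_⟩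
      exact aboveBoth_max_of_aboveBoth_subMax h₂ h₃ hb hza hzb (h z hzb hzt)

end Sigma2

theorem stmt9_general {V : Type*}
    (l₁ l₂ l₃ : LinearOrder V) (a₁ a₂ a₃ : V)
    (hR : IsStdRep l₁ l₂ l₃ a₁ a₂ a₃)
    (b : V) (hb : ∀ x, x ≠ a₁ → x ≠ b → l₁.lt x b)
    (s t : V) (hs : s ≠ b) (ht : t ≠ b) (hst : s ≠ t) :
    (Sigma2 (restrictOrder l₁ b) (restrictOrder l₂ b) (restrictOrder l₃ b)).Adj
        ⟨s, hs⟩ ⟨t, ht⟩ ↔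
      (Sigma2 l₁ l₂ l₃).Adj s t ∨
        (s = a₁ ∧ (Sigma2 l₁ l₂ l₃).Adj b t) ∨
        (t = a₁ ∧ (Sigma2 l₁ l₂ l₃).Adj b s) := by
  by_cases hsa : s = a₁
  · subst hsa
    rw [sigma2_restrictOrder_adj_max_iff hR.top₁ hR.a₁_small₂ hR.a₁_small₃ hb hs ht hst.symm]
    simp only [true_and, hst.symm, false_and, or_false]
  by_cases hta : t = a₁
  · subst hta
    rw [adj_comm, sigma2_restrictOrder_adj_max_iff hR.top₁ hR.a₁_small₂ hR.a₁_small₃ hb ht hs hsa,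
      adj_comm _ s]
    simp only [hsa, true_and, false_and, false_or]
  rw [sigma2_restrictOrder_adj_iff_of_ne hb hs ht hsa hta]
  simp only [hsa, hta, false_and, or_false]

/-- With b the <₁-maximum of V \ {a₁} and R' the restriction of R to
V' = V \ {b}: distinct s, t ∈ V' are adjacent in Σ₂(R') iff st is an edge of Σ₂(R), or
one of s, t is a₁ and the other is adjacent to b in Σ₂(R). (Σ₂(R') is obtained from
Σ₂(R) by contracting the edge a₁b, labelling the new vertex a₁.) -/
theorem stmt9 {V : Type*} [Fintype V] (hV : 4 ≤ Fintype.card V)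
    (l₁ l₂ l₃ : LinearOrder V) (a₁ a₂ a₃ : V)
    (hR : IsStdRep l₁ l₂ l₃ a₁ a₂ a₃)
    (b : V) (hba : b ≠ a₁) (hb : ∀ x, x ≠ a₁ → x ≠ b → l₁.lt x b)
    (s t : V) (hs : s ≠ b) (ht : t ≠ b) (hst : s ≠ t) :
    (Sigma2 (restrictOrder l₁ b) (restrictOrder l₂ b) (restrictOrder l₃ b)).Adj
        ⟨s, hs⟩ ⟨t, ht⟩ ↔
      (Sigma2 l₁ l₂ l₃).Adj s t ∨
        (s = a₁ ∧ (Sigma2 l₁ l₂ l₃).Adj b t) ∨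
        (t = a₁ ∧ (Sigma2 l₁ l₂ l₃).Adj b s) :=
  stmt9_general l₁ l₂ l₃ a₁ a₂ a₃ hR b hb s t hs ht hst
end

section
/- Let R = (<₁, <₂, <₃) be a standard representation of a finite set V with |V| ≥ 4, with <ᵢ-maximum elements a₁, a₂, a₃, let b be the <₁-maximum element of V \ {a₁}, and let R' be the standard representation of V' = V \ {b} obtained by restricting each <ᵢ to V'. If st is an edge of Σ₂(R') that is not an edge of Σ₂(R), then one of s, t equals a₁ and the other one is adjacent to b in Σ₂(R). -/
open SimpleGraph

variable {V : Type*}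

/-!
Since `st` is an edge of `Σ₂(R')`, the only vertex that can witness that it is not an edge of
`Σ₂(R)` is `b`: no order puts both `s` and `t` below `b`. As `b` is `<₁`-above everything but
`a₁`, one of `s, t` is `a₁`, say `s`. Every other `z ≠ b, t` lies above `a₁` and `t` in `<₂` or
`<₃` (not in `<₁`, where `a₁` is the maximum), and there `b` lies below `a₁` or below `t`, hence
below `z`. With `z = a₁` handled by `<₁`, this makes `b` adjacent to `t`.
-/

lemma lt_of_lt_both_of_not_lt_both {α : Type*} (l : LinearOrder α) {x y z w : α}
    (hx : l.lt x w) (hy : l.lt y w) (h : ¬(l.lt x z ∧ l.lt y z)) : l.lt z w := by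
  let := l
  exact lt_of_not_ge fun hwz => h ⟨hx.trans_le hwz, hy.trans_le hwz⟩

section Sigma2Restrict

variable {V : Type*} {l₁ l₂ l₃ : LinearOrder V} {b s t : V} {hs : s ≠ b} {ht : t ≠ b}

local notation "Σ₂'" => Sigma2 (restrictOrder l₁ b) (restrictOrder l₂ b) (restrictOrder l₃ b)

lemma sigma2_adj_of_restrict_adj (hadj : (Σ₂').Adj ⟨s, hs⟩ ⟨t, ht⟩)
    (hb : (l₁.lt s b ∧ l₁.lt t b) ∨ (l₂.lt s b ∧ l₂.lt t b) ∨ (l₃.lt s b ∧ l₃.lt t b)) :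
    (Sigma2 l₁ l₂ l₃).Adj s t := by
  refine ⟨fun hst => hadj.1 (Subtype.ext hst), fun z hzs hzt => ?_⟩
  by_cases hzb : z = b
  · exact hzb ▸ hb
  · exact hadj.2 ⟨z, hzb⟩ (fun h => hzs (congrArg Subtype.val h))
      (fun h => hzt (congrArg Subtype.val h))

lemma eq_or_eq_of_restrict_adj_of_not_adj {a₁ : V} (hb : ∀ x, x ≠ a₁ → x ≠ b → l₁.lt x b)
    (hadj : (Σ₂').Adj ⟨s, hs⟩ ⟨t, ht⟩) (hnadj : ¬(Sigma2 l₁ l₂ l₃).Adj s t) :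
    s = a₁ ∨ t = a₁ := by
  by_contra! hst
  exact hnadj (sigma2_adj_of_restrict_adj hadj (Or.inl ⟨hb s hst.1 hs, hb t hst.2 ht⟩))

lemma sigma2_adj_of_restrict_adj_of_isMaxOf {a₁ : V} (htop : IsMaxOf l₁ a₁) {ha : a₁ ≠ b}
    (hadj : (Σ₂').Adj ⟨a₁, ha⟩ ⟨t, ht⟩)
    (hnadj : ¬(Sigma2 l₁ l₂ l₃).Adj a₁ t) : (Sigma2 l₁ l₂ l₃).Adj b t := by
  have hta : t ≠ a₁ := fun h => hadj.1 (Subtype.ext h.symm)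
  obtain ⟨-, h₂, h₃⟩ : ¬(l₁.lt a₁ b ∧ l₁.lt t b) ∧ ¬(l₂.lt a₁ b ∧ l₂.lt t b) ∧
      ¬(l₃.lt a₁ b ∧ l₃.lt t b) := by
    simpa only [not_or] using mt (sigma2_adj_of_restrict_adj hadj) hnadj
  refine ⟨ht.symm, fun z hzb hzt => ?_⟩
  by_cases hza : z = a₁
  · exact hza ▸ Or.inl ⟨htop b ha.symm, htop t hta⟩
  rcases hadj.2 ⟨z, hzb⟩ (fun h => hza (congrArg Subtype.val h))
      (fun h => hzt (congrArg Subtype.val h)) with ⟨h, -⟩ | ⟨h, h'⟩ | ⟨h, h'⟩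
  · exact absurd (htop z hza) (by let := l₁; exact lt_asymm h)
  · exact Or.inr (Or.inl ⟨lt_of_lt_both_of_not_lt_both l₂ h h' h₂, h'⟩)
  · exact Or.inr (Or.inr ⟨lt_of_lt_both_of_not_lt_both l₃ h h' h₃, h'⟩)

end Sigma2Restrict

theorem stmt11_general {V : Type*}
    (l₁ l₂ l₃ : LinearOrder V) (a₁ a₂ a₃ : V)
    (hR : IsStdRep l₁ l₂ l₃ a₁ a₂ a₃)
    (b : V) (hb : ∀ x, x ≠ a₁ → x ≠ b → l₁.lt x b)
    (s t : V) (hs : s ≠ b) (ht : t ≠ b)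
    (hadj' : (Sigma2 (restrictOrder l₁ b) (restrictOrder l₂ b)
      (restrictOrder l₃ b)).Adj ⟨s, hs⟩ ⟨t, ht⟩)
    (hnadj : ¬(Sigma2 l₁ l₂ l₃).Adj s t) :
    (s = a₁ ∧ (Sigma2 l₁ l₂ l₃).Adj b t) ∨
      (t = a₁ ∧ (Sigma2 l₁ l₂ l₃).Adj b s) := by
  obtain rfl | rfl := eq_or_eq_of_restrict_adj_of_not_adj hb hadj' hnadj
  · exact Or.inl ⟨rfl, sigma2_adj_of_restrict_adj_of_isMaxOf hR.top₁ hadj' hnadj⟩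
  · exact Or.inr ⟨rfl, sigma2_adj_of_restrict_adj_of_isMaxOf hR.top₁ hadj'.symm
      (fun h => hnadj h.symm)⟩

/-- With b the <₁-maximum of V \ {a₁} and R' the restriction of R to
V' = V \ {b}: if st is an edge of Σ₂(R') but not of Σ₂(R), then one of s, t is a₁ and
the other is adjacent to b in Σ₂(R). -/
theorem stmt11 {V : Type*} [Fintype V] (hV : 4 ≤ Fintype.card V)
    (l₁ l₂ l₃ : LinearOrder V) (a₁ a₂ a₃ : V)
    (hR : IsStdRep l₁ l₂ l₃ a₁ a₂ a₃)
    (b : V) (hba : b ≠ a₁) (hb : ∀ x, x ≠ a₁ → x ≠ b → l₁.lt x b)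
    (s t : V) (hs : s ≠ b) (ht : t ≠ b)
    (hadj' : (Sigma2 (restrictOrder l₁ b) (restrictOrder l₂ b)
      (restrictOrder l₃ b)).Adj ⟨s, hs⟩ ⟨t, ht⟩)
    (hnadj : ¬(Sigma2 l₁ l₂ l₃).Adj s t) :
    (s = a₁ ∧ (Sigma2 l₁ l₂ l₃).Adj b t) ∨
      (t = a₁ ∧ (Sigma2 l₁ l₂ l₃).Adj b s) :=
  stmt11_general l₁ l₂ l₃ a₁ a₂ a₃ hR b hb s t hs ht hadj' hnadj
end
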